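/- Define, for f ∈ (−1, 1), γ(f) = −3f/(2 + √(4 − 3f²)), χ(f) = (1 + 3γ(f)²)/(3 + γ(f)²), η(f) = 8γ(f)²/(3(3 − γ(f)²)), and for a scattering ratio r_s ∈ [0, 1] set ξ(f) = χ(f) + r_s·η(f). Let α = ξ(f) − f·ξ'(f) and β = ξ'(f). Then β² + 4α = (ξ'(f) − 2f)² + 4 r_s (1/3 − χ(f) + f·χ'(f)) + 4(χ(f) − f²) > 0 for every f ∈ (−1, 1); consequently the flux-Jacobian matrix [[0, 1], [α, β]] of the diffusion-free perturbed M₁ system in slab geometry has two distinct real eigenvalues β/2 ± √(β²/4 + α), i.e. the system is strictly hyperbolic wherever |F| < cE. -/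

import Mathlib

/-!
With `s = √(4 - 3f²)`, which lies in `(1, 2]` for `|f| < 1`, one has `γ² = 3(2 - s)/(2 + s)`, so
the closure becomes `χ = (5 - 2s)/3`, `η = 4(2 - s)/(3s)` and `χ' = 2f/s`. This gives the identity
`η = 1/3 - χ + fχ'`, with `η ≥ 0`, and `χ - f² = (s - 1)²/3 > 0`. Since
`β² + 4(ξ - fβ) = (β - 2f)² + 4(ξ - f²)` for every `β`, the discriminant of the characteristic
polynomial `μ² - βμ - α` of `[[0, 1], [α, β]]` is positive.
-/

/-- The auxiliary variable `γ(f) = −3f/(2 + √(4 − 3f²))` of the slab-geometry `M₁`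
closure. -/
noncomputable def gammaM1 (f : ℝ) : ℝ := -3 * f / (2 + Real.sqrt (4 - 3 * f ^ 2))

/-- The Eddington factor `χ(f) = (1 + 3γ(f)²)/(3 + γ(f)²)`. -/
noncomputable def chiM1 (f : ℝ) : ℝ := (1 + 3 * (gammaM1 f) ^ 2) / (3 + (gammaM1 f) ^ 2)

/-- The convective correction coefficient `η(f) = 8γ(f)²/(3(3 − γ(f)²))`. -/
noncomputable def etaM1 (f : ℝ) : ℝ := 8 * (gammaM1 f) ^ 2 / (3 * (3 - (gammaM1 f) ^ 2))

/-- The total flux coefficient `ξ(f) = χ(f) + r_s·η(f)` of the diffusion-free perturbed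
`M₁` model in slab geometry. -/
noncomputable def xiM1 (rs : ℝ) (f : ℝ) : ℝ := chiM1 f + rs * etaM1 f

theorem Matrix.det_smul_one_sub_fin_two_companion {R : Type*} [CommRing R] (a b μ : R) :
    (μ • (1 : Matrix (Fin 2) (Fin 2) R) - !![0, 1; a, b]).det = μ ^ 2 - b * μ - a := by
  have hmat : μ • (1 : Matrix (Fin 2) (Fin 2) R) - !![0, 1; a, b] = !![μ, -1; -a, μ - b] := by
    ext i j
    fin_cases i <;> fin_cases j <;> simp
  rw [hmat, Matrix.det_fin_two_of]
  ring

theorem fin_two_companion_has_distinct_real_roots (a b : ℝ) (h : 0 < b ^ 2 + 4 * a) :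
    b / 2 + √(b ^ 2 / 4 + a) ≠ b / 2 - √(b ^ 2 / 4 + a) ∧
    Matrix.det ((b / 2 + √(b ^ 2 / 4 + a)) • (1 : Matrix (Fin 2) (Fin 2) ℝ) - !![0, 1; a, b]) = 0 ∧
    Matrix.det ((b / 2 - √(b ^ 2 / 4 + a)) • (1 : Matrix (Fin 2) (Fin 2) ℝ) - !![0, 1; a, b]) = 0 := by
  have hd : 0 < b ^ 2 / 4 + a := by linarith
  have hsq := Real.sq_sqrt hd.le
  refine ⟨fun heq => (Real.sqrt_pos.2 hd).ne' (by linarith), ?_, ?_⟩ <;>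
  · rw [Matrix.det_smul_one_sub_fin_two_companion]
    linear_combination hsq

section ClosureInSqrt

variable {f : ℝ}

theorem gammaM1_sq (hf : 3 * f ^ 2 ≤ 4) :
    gammaM1 f ^ 2 = 3 * (2 - √(4 - 3 * f ^ 2)) / (2 + √(4 - 3 * f ^ 2)) := by
  have hsq := Real.sq_sqrt (sub_nonneg.2 hf)
  have hpos : 0 < 2 + √(4 - 3 * f ^ 2) := by positivity
  rw [gammaM1, div_pow, div_eq_div_iff (by positivity) hpos.ne']
  linear_combination (3 * (2 + √(4 - 3 * f ^ 2))) * hsq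

theorem chiM1_eq (hf : 3 * f ^ 2 ≤ 4) : chiM1 f = (5 - 2 * √(4 - 3 * f ^ 2)) / 3 := by
  have hpos : 0 < 2 + √(4 - 3 * f ^ 2) := by positivity
  rw [chiM1, gammaM1_sq hf]
  field_simp
  ring

theorem etaM1_eq (hf : 3 * f ^ 2 < 4) :
    etaM1 f = 4 * (2 - √(4 - 3 * f ^ 2)) / (3 * √(4 - 3 * f ^ 2)) := by
  have hs : 0 < √(4 - 3 * f ^ 2) := Real.sqrt_pos.2 (by linarith)
  have hpos : 0 < 2 + √(4 - 3 * f ^ 2) := by positivity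
  rw [etaM1, gammaM1_sq hf.le]
  field_simp [hs.ne']
  ring

theorem etaM1_nonneg (hf : 3 * f ^ 2 ≤ 4) : 0 ≤ etaM1 f := by
  have hs : √(4 - 3 * f ^ 2) ≤ 2 :=
    (Real.sqrt_le_left zero_le_two).2 (by nlinarith)
  have hpos : 0 < 2 + √(4 - 3 * f ^ 2) := by positivity
  have hden : 3 - gammaM1 f ^ 2 = 6 * √(4 - 3 * f ^ 2) / (2 + √(4 - 3 * f ^ 2)) := by
    rw [gammaM1_sq hf]
    field_simp
    ring
  rw [etaM1, hden]
  positivity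

theorem sq_lt_chiM1 (hf : f ^ 2 < 1) : f ^ 2 < chiM1 f := by
  have hsq := Real.sq_sqrt (show 0 ≤ 4 - 3 * f ^ 2 by linarith)
  have hs : 1 < √(4 - 3 * f ^ 2) := (Real.lt_sqrt zero_le_one).2 (by linarith)
  have hgap : chiM1 f - f ^ 2 = (√(4 - 3 * f ^ 2) - 1) ^ 2 / 3 := by
    rw [chiM1_eq (by linarith)]
    linear_combination (-1 / 3 : ℝ) * hsq
  nlinarith [hgap, pow_pos (sub_pos.2 hs) 2]

theorem hasDerivAt_chiM1 (hf : 3 * f ^ 2 < 4) :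
    HasDerivAt chiM1 (2 * f / √(4 - 3 * f ^ 2)) f := by
  have hs : 0 < √(4 - 3 * f ^ 2) := Real.sqrt_pos.2 (by linarith)
  have hinner : HasDerivAt (fun x : ℝ => 4 - 3 * x ^ 2) (-(3 * (2 * f))) f := by
    simpa using ((hasDerivAt_pow 2 f).const_mul (3 : ℝ)).const_sub 4
  have hform := ((hinner.sqrt (by linarith)).const_mul 2).const_sub 5 |>.div_const 3
  have hnear : ∀ᶠ x in nhds f, 3 * x ^ 2 < 4 :=
    (by fun_prop : Continuous fun x : ℝ => 3 * x ^ 2).continuousAt.eventually_lt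
      continuousAt_const hf
  refine (hform.congr_of_eventuallyEq (hnear.mono fun x hx => chiM1_eq hx.le)).congr_deriv ?_
  field_simp

theorem etaM1_eq_one_third_sub_chiM1_add (hf : 3 * f ^ 2 < 4) :
    etaM1 f = 1 / 3 - chiM1 f + f * deriv chiM1 f := by
  have hsq := Real.sq_sqrt (show 0 ≤ 4 - 3 * f ^ 2 by linarith)
  have hs : 0 < √(4 - 3 * f ^ 2) := Real.sqrt_pos.2 (by linarith)
  rw [(hasDerivAt_chiM1 hf).deriv, etaM1_eq hf, chiM1_eq hf.le]
  field_simp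
  linear_combination (-2 : ℝ) * hsq

end ClosureInSqrt

/-- Strict hyperbolicity of the diffusion-free perturbed `M₁` model in slab geometry:
for a scattering ratio `r_s ∈ [0,1]` and every normalized flux `f ∈ (−1, 1)`, with
`α = ξ(f) − f·ξ'(f)` and `β = ξ'(f)`, the radical satisfies
`β² + 4α = (ξ'(f) − 2f)² + 4 r_s (1/3 − χ(f) + f·χ'(f)) + 4(χ(f) − f²) > 0`, hence the
flux-Jacobian `[[0, 1], [α, β]]` has two distinct real eigenvalues `β/2 ± √(β²/4 + α)`. -/
theorem perturbedM1_strictly_hyperbolic (rs : ℝ) (hrs : rs ∈ Set.Icc (0 : ℝ) 1) :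
    ∀ f : ℝ, f ∈ Set.Ioo (-1 : ℝ) 1 →
      (deriv (xiM1 rs) f) ^ 2 + 4 * (xiM1 rs f - f * deriv (xiM1 rs) f)
          = (deriv (xiM1 rs) f - 2 * f) ^ 2
            + 4 * rs * (1 / 3 - chiM1 f + f * deriv chiM1 f)
            + 4 * (chiM1 f - f ^ 2) ∧
      0 < (deriv (xiM1 rs) f) ^ 2 + 4 * (xiM1 rs f - f * deriv (xiM1 rs) f) ∧
      (deriv (xiM1 rs) f / 2
          + Real.sqrt ((deriv (xiM1 rs) f) ^ 2 / 4 + (xiM1 rs f - f * deriv (xiM1 rs) f)))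
        ≠ (deriv (xiM1 rs) f / 2
          - Real.sqrt ((deriv (xiM1 rs) f) ^ 2 / 4 + (xiM1 rs f - f * deriv (xiM1 rs) f))) ∧
      Matrix.det
        ((deriv (xiM1 rs) f / 2
            + Real.sqrt ((deriv (xiM1 rs) f) ^ 2 / 4
              + (xiM1 rs f - f * deriv (xiM1 rs) f))) • (1 : Matrix (Fin 2) (Fin 2) ℝ)
          - !![0, 1; xiM1 rs f - f * deriv (xiM1 rs) f, deriv (xiM1 rs) f]) = 0 ∧
      Matrix.det
        ((deriv (xiM1 rs) f / 2
            - Real.sqrt ((deriv (xiM1 rs) f) ^ 2 / 4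
              + (xiM1 rs f - f * deriv (xiM1 rs) f))) • (1 : Matrix (Fin 2) (Fin 2) ℝ)
          - !![0, 1; xiM1 rs f - f * deriv (xiM1 rs) f, deriv (xiM1 rs) f]) = 0 := by
  intro f hf
  have hf1 : f ^ 2 < 1 := by nlinarith [hf.1, hf.2]
  have hf3 : 3 * f ^ 2 < 4 := by linarith
  set β := deriv (xiM1 rs) f
  have hId : β ^ 2 + 4 * (xiM1 rs f - f * β)
      = (β - 2 * f) ^ 2 + 4 * rs * (1 / 3 - chiM1 f + f * deriv chiM1 f)
        + 4 * (chiM1 f - f ^ 2) := by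
    rw [xiM1, etaM1_eq_one_third_sub_chiM1_add hf3]
    ring
  have hpos : 0 < β ^ 2 + 4 * (xiM1 rs f - f * β) := by
    rw [hId, ← etaM1_eq_one_third_sub_chiM1_add hf3]
    have := mul_nonneg hrs.1 (etaM1_nonneg hf3.le)
    nlinarith [sq_nonneg (β - 2 * f), sq_lt_chiM1 hf1]
  exact ⟨hId, hpos, fin_two_companion_has_distinct_real_roots _ _ hpos⟩
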